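/- arXiv:2412.03317 — 8 statements merged into one kernel-verified Lean document; each statement's English description precedes it below -/
import Mathlib

section
/- Let a, b, c, M be positive real numbers and let g_a, g_c be positive real numbers satisfying the memory constraint g_a · g_c ≤ M. Then the total transfer cost of tiled matrix multiplication satisfies (a·c/(g_a·g_c)) · (g_a·b + b·g_c + g_a·g_c) ≥ 2·a·b·c·M^(−1/2) + a·c, and equality holds for the square tiling g_a = g_c = √M. -/
/-- Tiled matrix multiplication: the total transfer cost
`(a·c/(g_a·g_c)) · (g_a·b + b·g_c + g_a·g_c)` is at least `2·a·b·c·M^(-1/2) + a·c`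
whenever the memory constraint `g_a · g_c ≤ M` holds, with equality for the square
tiling `g_a = g_c = √M`. -/
theorem matmul_tiled_transfer_lower_bound
    (a b c M g_a g_c : ℝ) (ha : 0 < a) (hb : 0 < b) (hc : 0 < c) (hM : 0 < M)
    (hga : 0 < g_a) (hgc : 0 < g_c) (hmem : g_a * g_c ≤ M) :
    (a * c / (g_a * g_c)) * (g_a * b + b * g_c + g_a * g_c)
      ≥ 2 * a * b * c * M ^ (-(1 / 2) : ℝ) + a * c ∧
    (g_a = Real.sqrt M → g_c = Real.sqrt M →
      (a * c / (g_a * g_c)) * (g_a * b + b * g_c + g_a * g_c)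
        = 2 * a * b * c * M ^ (-(1 / 2) : ℝ) + a * c) := by
  have ht : 0 < Real.sqrt M := Real.sqrt_pos.mpr hM
  have htsq : Real.sqrt M * Real.sqrt M = M := Real.mul_self_sqrt hM.le
  have hrpow : M ^ (-(1 / 2) : ℝ) = (Real.sqrt M)⁻¹ := by
    rw [Real.rpow_neg hM.le, Real.sqrt_eq_rpow]
  set t := Real.sqrt M with htdef
  have hu : 0 < Real.sqrt g_a := Real.sqrt_pos.mpr hga
  have hv : 0 < Real.sqrt g_c := Real.sqrt_pos.mpr hgc
  have husq : Real.sqrt g_a * Real.sqrt g_a = g_a := Real.mul_self_sqrt hga.le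
  have hvsq : Real.sqrt g_c * Real.sqrt g_c = g_c := Real.mul_self_sqrt hgc.le
  have huv : Real.sqrt g_a * Real.sqrt g_c ≤ t := by
    nlinarith [mul_pos hu hv]
  constructor
  · rw [hrpow, ge_iff_le, ← sub_nonneg]
    have h1 : (a * c / (g_a * g_c)) * (g_a * b + b * g_c + g_a * g_c)
        - (2 * a * b * c * t⁻¹ + a * c)
        = a * b * c * ((g_a + g_c) * t - 2 * (g_a * g_c)) / (g_a * g_c * t) := by
      field_simp
      ring
    rw [h1]
    apply div_nonneg _ (by positivity)
    have h2 : 2 * (g_a * g_c) ≤ (g_a + g_c) * t := by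
      nlinarith [sq_nonneg (Real.sqrt g_a - Real.sqrt g_c), mul_pos hu hv]
    nlinarith [mul_pos (mul_pos ha hb) hc]
  · intro h1 h2
    rw [hrpow, h1, h2, htsq]
    field_simp
    nlinarith [htsq, mul_pos (mul_pos ha hc) hb]
end

section
/- Let q̄, x̄, d, M be positive real numbers and let g be a positive real number satisfying the memory constraint 2·g·d ≤ M. Then the total transfer cost of streamed attention satisfies (q̄/g) · (2·g·d + 2·x̄·d) ≥ 2·q̄·d + 4·x̄·q̄·d²·M^(−1), with equality when g = M/(2·d). -/
/-- Streamed attention: the total transfer cost `(q̄/g) · (2·g·d + 2·x̄·d)` is at least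
`2·q̄·d + 4·x̄·q̄·d²·M⁻¹` under the memory constraint `2·g·d ≤ M`, with equality
when `g = M/(2·d)`. -/
theorem attention_transfer_lower_bound
    (qb xb d M g : ℝ) (hq : 0 < qb) (hx : 0 < xb) (hd : 0 < d) (hM : 0 < M)
    (hg : 0 < g) (hmem : 2 * g * d ≤ M) :
    (qb / g) * (2 * g * d + 2 * xb * d) ≥ 2 * qb * d + 4 * xb * qb * d ^ 2 * M⁻¹ ∧
    (g = M / (2 * d) →
      (qb / g) * (2 * g * d + 2 * xb * d) = 2 * qb * d + 4 * xb * qb * d ^ 2 * M⁻¹) := by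
  have hL : (qb / g) * (2 * g * d + 2 * xb * d)
      = 2 * qb * d + 2 * xb * qb * d / g := by
    field_simp
  constructor
  · rw [hL]
    have h1 : 4 * xb * qb * d ^ 2 * M⁻¹ ≤ 2 * xb * qb * d / g := by
      rw [div_eq_mul_inv, mul_comm (4 * xb * qb * d ^ 2) _,
        mul_comm (2 * xb * qb * d) _, ← div_eq_inv_mul, ← div_eq_inv_mul,
        div_le_div_iff₀ hM hg]
      nlinarith [mul_le_mul_of_nonneg_left hmem (by positivity : (0:ℝ) ≤ 2*xb*qb*d)]
    linarith
  · intro hgv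
    subst hgv
    rw [hL]
    field_simp
    ring
end

section
/- Let h, q̄, x̄, d, M be positive real numbers and let g_q, g_h be positive real numbers satisfying the memory constraint 2·g_q·g_h·d ≤ M. Then the total transfer cost of streamed multi-head attention satisfies (q̄·h/(g_q·g_h)) · (2·g_q·g_h·d + 2·x̄·d) ≥ 2·h·q̄·d + 4·h·x̄·q̄·d²·M^(−1). -/
/-- Streamed multi-head attention: the total transfer cost
`(q̄·h/(g_q·g_h)) · (2·g_q·g_h·d + 2·x̄·d)` is at least `2·h·q̄·d + 4·h·x̄·q̄·d²·M⁻¹`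
under the memory constraint `2·g_q·g_h·d ≤ M`. -/
theorem multi_head_attention_transfer_lower_bound
    (h qb xb d M g_q g_h : ℝ) (hh : 0 < h) (hq : 0 < qb) (hx : 0 < xb) (hd : 0 < d)
    (hM : 0 < M) (hgq : 0 < g_q) (hgh : 0 < g_h) (hmem : 2 * g_q * g_h * d ≤ M) :
    (qb * h / (g_q * g_h)) * (2 * g_q * g_h * d + 2 * xb * d)
      ≥ 2 * h * qb * d + 4 * h * xb * qb * d ^ 2 * M⁻¹ := by
  have hg : 0 < g_q * g_h := mul_pos hgq hgh
  rw [ge_iff_le, div_mul_eq_mul_div, le_div_iff₀ hg]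
  have h1 : M⁻¹ * (2 * g_q * g_h * d) ≤ M⁻¹ * M :=
    mul_le_mul_of_nonneg_left hmem (inv_pos.mpr hM).le
  rw [inv_mul_cancel₀ hM.ne'] at h1
  nlinarith [mul_pos (mul_pos (mul_pos hh hx) hq) hd, sq_nonneg d]
end

section
/- Let g, q̄, x̄, d, M be positive real numbers and let g_q, g_g be positive real numbers satisfying the memory constraint 2·g_q·g_g·d ≤ M. Then the total transfer cost of streamed grouped query attention satisfies (g·q̄/(g_q·g_g)) · (2·g_q·g_g·d + 2·x̄·d) ≥ 2·g·q̄·d + 4·g·x̄·q̄·d²·M^(−1). -/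
/-- Streamed grouped query attention: the total transfer cost
`(g·q̄/(g_q·g_g)) · (2·g_q·g_g·d + 2·x̄·d)` is at least `2·g·q̄·d + 4·g·x̄·q̄·d²·M⁻¹`
under the memory constraint `2·g_q·g_g·d ≤ M`. -/
theorem grouped_query_attention_transfer_lower_bound
    (g qb xb d M g_q g_g : ℝ) (hg : 0 < g) (hq : 0 < qb) (hx : 0 < xb) (hd : 0 < d)
    (hM : 0 < M) (hgq : 0 < g_q) (hgg : 0 < g_g) (hmem : 2 * g_q * g_g * d ≤ M) :
    (g * qb / (g_q * g_g)) * (2 * g_q * g_g * d + 2 * xb * d)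
      ≥ 2 * g * qb * d + 4 * g * xb * qb * d ^ 2 * M⁻¹ := by
  have hgg' : 0 < g_q * g_g := mul_pos hgq hgg
  rw [ge_iff_le, div_mul_eq_mul_div, le_div_iff₀ hgg']
  have hinv : M⁻¹ * M = 1 := inv_mul_cancel₀ hM.ne'
  nlinarith [mul_pos (mul_pos hg hq) hd, mul_pos hx hd, inv_pos.mpr hM,
    mul_le_mul_of_nonneg_left hmem (le_of_lt (inv_pos.mpr hM)),
    mul_pos (mul_pos (mul_pos hg hx) hq) (mul_pos hd hd)]
end

section
/- Let m ≥ 1 and n ≥ 1, let x : Fin m → ℝ and y : Fin n → ℝ, and let w : Fin (m+n) → ℝ be the concatenation of x and y. Define μ₁ = max_i x_i, z₁ = ∑_i exp(x_i − μ₁), μ = max(μ₁, max_j y_j), δ = exp(μ₁ − μ), and z = δ·z₁ + ∑_j exp(y_j − μ). Then μ equals the maximum entry of w, z = ∑_k exp(w_k − μ), and consequently SoftMax(w) at an index from the first block equals δ·exp(x_i − μ₁)/z while at an index from the second block it equals exp(y_j − μ)/z. -/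
/-- SoftMax over a finite index type. -/
noncomputable def softmax {ι : Type*} [Fintype ι] (x : ι → ℝ) (i : ι) : ℝ :=
  Real.exp (x i) / ∑ j, Real.exp (x j)

/-- Auxiliary SoftMax accumulator: concatenating a block `y` onto `x` updates the
running maximum `μ` and sum `z` correctly, and the SoftMax of the concatenation is
`δ·exp(x i − μ₁)/z` on the first block and `exp(y j − μ)/z` on the second. -/
theorem auxiliary_softmax_accumulator
    (m n : ℕ) (hm : 0 < m) (hn : 0 < n)
    (x : Fin m → ℝ) (y : Fin n → ℝ)
    (w : Fin (m + n) → ℝ) (hw : w = Fin.append x y)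
    (μ₁ z₁ μ δ z : ℝ)
    (hμ₁ : μ₁ = Finset.univ.sup' ⟨⟨0, hm⟩, Finset.mem_univ _⟩ x)
    (hz₁ : z₁ = ∑ i, Real.exp (x i - μ₁))
    (hμ : μ = max μ₁ (Finset.univ.sup' ⟨⟨0, hn⟩, Finset.mem_univ _⟩ y))
    (hδ : δ = Real.exp (μ₁ - μ))
    (hz : z = δ * z₁ + ∑ j, Real.exp (y j - μ)) :
    μ = Finset.univ.sup'
        ⟨⟨0, Nat.lt_of_lt_of_le hm (Nat.le_add_right m n)⟩, Finset.mem_univ _⟩ w ∧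
    z = ∑ k, Real.exp (w k - μ) ∧
    (∀ i : Fin m, softmax w (Fin.castAdd n i) = δ * Real.exp (x i - μ₁) / z) ∧
    (∀ j : Fin n, softmax w (Fin.natAdd m j) = Real.exp (y j - μ) / z) := by
  have hwl : ∀ i : Fin m, w (Fin.castAdd n i) = x i := by
    intro i; rw [hw]; exact Fin.append_left x y i
  have hwr : ∀ j : Fin n, w (Fin.natAdd m j) = y j := by
    intro j; rw [hw]; exact Fin.append_right x y j
  -- z identity
  have hzsum : z = ∑ k, Real.exp (w k - μ) := by
    rw [Fin.sum_univ_add]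
    simp only [hwl, hwr]
    rw [hz, hz₁, hδ, Finset.mul_sum]
    congr 1
    apply Finset.sum_congr rfl
    intro i _
    rw [← Real.exp_add]
    ring_nf
  have hμsup : μ = Finset.univ.sup'
      ⟨⟨0, Nat.lt_of_lt_of_le hm (Nat.le_add_right m n)⟩, Finset.mem_univ _⟩ w := by
    apply le_antisymm
    · rw [hμ]
      apply max_le
      · rw [hμ₁]
        apply Finset.sup'_le
        intro i _
        rw [← hwl i]
        exact Finset.le_sup' w (Finset.mem_univ _)
      · apply Finset.sup'_le
        intro j _
        rw [← hwr j]
        exact Finset.le_sup' w (Finset.mem_univ _)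
    · apply Finset.sup'_le
      intro k _
      refine Fin.addCases (fun i => ?_) (fun j => ?_) k
      · rw [hwl i, hμ]
        exact le_max_of_le_left (hμ₁ ▸ Finset.le_sup' x (Finset.mem_univ i))
      · rw [hwr j, hμ]
        exact le_max_of_le_right (Finset.le_sup' y (Finset.mem_univ j))
  have hzpos : 0 < z := by
    rw [hzsum]
    exact Finset.sum_pos (fun k _ => Real.exp_pos _)
      ⟨_, Finset.mem_univ (⟨0, Nat.lt_of_lt_of_le hm (Nat.le_add_right m n)⟩ : Fin (m+n))⟩
  have hS : (∑ k, Real.exp (w k)) = Real.exp μ * z := by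
    rw [hzsum, Finset.mul_sum]
    apply Finset.sum_congr rfl
    intro k _
    rw [← Real.exp_add]
    ring_nf
  refine ⟨hμsup, hzsum, ?_, ?_⟩
  · intro i
    unfold softmax
    rw [hS, hwl i, hδ, ← Real.exp_add]
    rw [div_eq_div_iff (by positivity) (by positivity),
      show μ₁ - μ + (x i - μ₁) = x i - μ from by ring, Real.exp_sub]
    field_simp
  · intro j
    unfold softmax
    rw [hS, hwr j]
    rw [div_eq_div_iff (by positivity) (by positivity), Real.exp_sub]
    field_simp
end

section
/- Let m ≥ 1, n ≥ 1, and d ∈ ℕ. Let x : Fin m → ℝ, y : Fin n → ℝ, U : Fin m → (Fin d → ℝ), W : Fin n → (Fin d → ℝ), and let w and V be the concatenations of (x, y) and (U, W) respectively. Define μ₁ = max_i x_i, z₁ = ∑_i exp(x_i − μ₁), o₁ = ∑_i exp(x_i − μ₁) • U_i, then μ = max(μ₁, max_j y_j), δ = exp(μ₁ − μ), z = δ·z₁ + ∑_j exp(y_j − μ), and o = δ • o₁ + ∑_j exp(y_j − μ) • W_j. Then (1/z) • o = ∑_k SoftMax(w)_k • V_k; that is, the streamed accumulator exactly computes the SoftMax-weighted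 sum of the rows V_k. -/
/-- Streaming SoftMax-Contraction accumulator: after processing the two blocks
`(x, U)` and `(y, W)` with rescaling factor `δ`, the normalized output `(1/z) • o`
equals the SoftMax-weighted sum `∑_k SoftMax(w)_k • V_k` over the concatenation. -/
theorem softmax_contraction_accumulator
    (m n d : ℕ) (hm : 0 < m) (hn : 0 < n)
    (x : Fin m → ℝ) (y : Fin n → ℝ)
    (U : Fin m → Fin d → ℝ) (W : Fin n → Fin d → ℝ)
    (w : Fin (m + n) → ℝ) (hw : w = Fin.append x y)
    (V : Fin (m + n) → Fin d → ℝ) (hV : V = Fin.append U W)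
    (μ₁ z₁ : ℝ) (o₁ : Fin d → ℝ) (μ δ z : ℝ) (o : Fin d → ℝ)
    (hμ₁ : μ₁ = Finset.univ.sup' ⟨⟨0, hm⟩, Finset.mem_univ _⟩ x)
    (hz₁ : z₁ = ∑ i, Real.exp (x i - μ₁))
    (ho₁ : o₁ = ∑ i, Real.exp (x i - μ₁) • U i)
    (hμ : μ = max μ₁ (Finset.univ.sup' ⟨⟨0, hn⟩, Finset.mem_univ _⟩ y))
    (hδ : δ = Real.exp (μ₁ - μ))
    (hz : z = δ * z₁ + ∑ j, Real.exp (y j - μ))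
    (ho : o = δ • o₁ + ∑ j, Real.exp (y j - μ) • W j) :
    (1 / z) • o = ∑ k, softmax w k • V k := by
  have hkey : ∀ i : Fin m, δ * Real.exp (x i - μ₁) = Real.exp (x i - μ) := by
    intro i
    rw [hδ, ← Real.exp_add]
    ring_nf
  have hzSum : z = ∑ k, Real.exp (w k - μ) := by
    rw [hz, hz₁, Finset.mul_sum, hw, Fin.sum_univ_add]
    congr 1
    · exact Finset.sum_congr rfl fun i _ => by rw [hkey, Fin.append_left]
    · exact Finset.sum_congr rfl fun j _ => by rw [Fin.append_right]
  have hoSum : o = ∑ k, Real.exp (w k - μ) • V k := by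
    rw [ho, ho₁, Finset.smul_sum, hw, hV, Fin.sum_univ_add]
    congr 1
    · refine Finset.sum_congr rfl fun i _ => ?_
      rw [smul_smul, hkey, Fin.append_left, Fin.append_left]
    · exact Finset.sum_congr rfl fun j _ => by rw [Fin.append_right, Fin.append_right]
  have hzpos : 0 < z := by
    rw [hzSum]
    refine Finset.sum_pos (fun k _ => Real.exp_pos _) ?_
    exact ⟨⟨0, Nat.add_pos_left hm n⟩, Finset.mem_univ _⟩
  have hsm : ∀ k, softmax w k = Real.exp (w k - μ) / z := by
    intro k
    have hexp : ∑ j, Real.exp (w j) = Real.exp μ * z := by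
      rw [hzSum, Finset.mul_sum]
      exact Finset.sum_congr rfl fun j _ => by rw [← Real.exp_add]; ring_nf
    rw [softmax, hexp, Real.exp_sub, div_div]
  rw [hoSum, Finset.smul_sum]
  exact Finset.sum_congr rfl fun k _ => by
    rw [hsm, smul_smul]; congr 1; ring
end

section
/- Let β > 0, d ∈ ℕ, m ≥ 1, n ≥ 1. Let Q : Fin q̄ → (Fin d → ℝ) be the queries and let the keys and values be split into blocks K₁ : Fin m → (Fin d → ℝ), K₂ : Fin n → (Fin d → ℝ), V₁ : Fin m → (Fin d → ℝ), V₂ : Fin n → (Fin d → ℝ), with K and V their concatenations. Fix a query row r and define first-block scores x_i = β·∑_{e} Q_r(e)·K₁_i(e) and second-block scores y_j = β·∑_{e} Q_r(e)·K₂_j(e). Then the streamed two-block computation — μ₁ = max_i x_i, z₁ = ∑_i exp(x_i − μ₁), o₁ = ∑_i exp(x_i − μ₁) • V₁_i, followed by μ = max(μ₁, max_j y_j), δ = exp(μ₁ − μ), z = δ·z₁ + ∑_j exp(y_j − μ), o = δ • o₁ + ∑_j exp(y_j − μ) • V₂_j — satisfies (1/z) • o = ∑_k SoftMax(s)_k •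 V_k, where s_k = β·∑_e Q_r(e)·K_k(e) is the full score vector. Hence streaming attention over key/value blocks computes exactly the attention output row SoftMax(β·Q·Kᵀ)·V at row r. -/
/-- Streaming attention over two key/value blocks computes exactly the attention
output row `SoftMax(β·Q·Kᵀ)·V` at query row `r`. -/
theorem streamed_attention_correct
    (qn d m n : ℕ) (hm : 0 < m) (hn : 0 < n) (β : ℝ) (hβ : 0 < β)
    (Q : Fin qn → Fin d → ℝ)
    (K₁ : Fin m → Fin d → ℝ) (K₂ : Fin n → Fin d → ℝ)
    (V₁ : Fin m → Fin d → ℝ) (V₂ : Fin n → Fin d → ℝ)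
    (K : Fin (m + n) → Fin d → ℝ) (hK : K = Fin.append K₁ K₂)
    (V : Fin (m + n) → Fin d → ℝ) (hV : V = Fin.append V₁ V₂)
    (r : Fin qn)
    (x : Fin m → ℝ) (hx : ∀ i, x i = β * ∑ e, Q r e * K₁ i e)
    (y : Fin n → ℝ) (hy : ∀ j, y j = β * ∑ e, Q r e * K₂ j e)
    (s : Fin (m + n) → ℝ) (hs : ∀ k, s k = β * ∑ e, Q r e * K k e)
    (μ₁ z₁ : ℝ) (o₁ : Fin d → ℝ) (μ δ z : ℝ) (o : Fin d → ℝ)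
    (hμ₁ : μ₁ = Finset.univ.sup' ⟨⟨0, hm⟩, Finset.mem_univ _⟩ x)
    (hz₁ : z₁ = ∑ i, Real.exp (x i - μ₁))
    (ho₁ : o₁ = ∑ i, Real.exp (x i - μ₁) • V₁ i)
    (hμ : μ = max μ₁ (Finset.univ.sup' ⟨⟨0, hn⟩, Finset.mem_univ _⟩ y))
    (hδ : δ = Real.exp (μ₁ - μ))
    (hz : z = δ * z₁ + ∑ j, Real.exp (y j - μ))
    (ho : o = δ • o₁ + ∑ j, Real.exp (y j - μ) • V₂ j) :
    (1 / z) • o = ∑ k, softmax s k • V k := by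
  -- s restricted to the two blocks equals x, y
  have hsx : ∀ i : Fin m, s (Fin.castAdd n i) = x i := by
    intro i
    rw [hs, hx, hK, Fin.append_left]
  have hsy : ∀ j : Fin n, s (Fin.natAdd m j) = y j := by
    intro j
    rw [hs, hy, hK, Fin.append_right]
  -- z = ∑ exp(s k - μ)
  have hzsum : z = ∑ k, Real.exp (s k - μ) := by
    rw [Fin.sum_univ_add]
    simp only [hsx, hsy]
    rw [hz, hδ, hz₁, Finset.mul_sum]
    congr 1
    refine Finset.sum_congr rfl fun i _ => ?_
    rw [← Real.exp_add]; ring_nf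
  -- o = ∑ exp(s k - μ) • V k
  have hosum : o = ∑ k, Real.exp (s k - μ) • V k := by
    rw [Fin.sum_univ_add]
    simp only [hsx, hsy, hV, Fin.append_left, Fin.append_right]
    rw [ho, hδ, ho₁, Finset.smul_sum]
    congr 1
    refine Finset.sum_congr rfl fun i _ => ?_
    rw [smul_smul, ← Real.exp_add]; ring_nf
  -- exp(s k - μ) = exp(-μ) * exp(s k)
  have hexp : ∀ k, Real.exp (s k - μ) = Real.exp (-μ) * Real.exp (s k) := by
    intro k; rw [← Real.exp_add]; ring_nf
  have hS : (0:ℝ) < ∑ k, Real.exp (s k) :=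
    Finset.sum_pos (fun k _ => Real.exp_pos _)
      ⟨⟨0, Nat.lt_of_lt_of_le hm (Nat.le_add_right m n)⟩, Finset.mem_univ _⟩
  have hzval : z = Real.exp (-μ) * ∑ k, Real.exp (s k) := by
    rw [hzsum, Finset.mul_sum]; exact Finset.sum_congr rfl fun k _ => hexp k
  have hzpos : (0:ℝ) < z := by
    rw [hzval]; positivity
  rw [hosum, Finset.smul_sum]
  refine Finset.sum_congr rfl fun k _ => ?_
  rw [smul_smul]
  congr 1
  rw [hexp k, hzval, softmax]
  field_simp
end

section
/- Let n ≥ 1, d ∈ ℕ, x : Fin n → ℝ, V : Fin n → (Fin d → ℝ), and let x and V be partitioned into k ≥ 1 consecutive nonempty blocks (x⁽¹⁾,V⁽¹⁾),…,(x⁽ᵏ⁾,V⁽ᵏ⁾). Initialize (μ, z, o) by μ = max of x⁽¹⁾, z = ∑_i exp(x⁽¹⁾_i − μ), o = ∑_i exp(x⁽¹⁾_i − μ) • V⁽¹⁾_i, and for each subsequent block update μ' = max(μ, max of the block), δ = exp(μ − μ'), z' = δ·z + ∑_j exp(block_j − μ'), o' = δ • o + ∑_j exp(block_j − μ') • Vblock_j.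 Then after processing all k blocks, the final state (μ*, z*, o*) satisfies μ* = max_i x_i, z* = ∑_i exp(x_i − μ*), and (1/z*) • o* = ∑_i SoftMax(x)_i • V_i. -/
/-- Initial state of the streaming SoftMax-Contraction accumulator on the first
(nonempty) block: running maximum, unnormalized sum, and unnormalized output. -/
noncomputable def smInit {d n : ℕ} (hn : 0 < n) (b : Fin n → ℝ)
    (Vb : Fin n → Fin d → ℝ) : ℝ × ℝ × (Fin d → ℝ) :=
  let μ := Finset.univ.sup' ⟨⟨0, hn⟩, Finset.mem_univ _⟩ b
  (μ, ∑ j, Real.exp (b j - μ), ∑ j, Real.exp (b j - μ) • Vb j)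

/-- One streaming update of the SoftMax-Contraction accumulator on a subsequent
(nonempty) block: update the maximum, rescale the old state by
`δ = exp(old max − new max)`, and add the new block's contributions. -/
noncomputable def smStep {d n : ℕ} (hn : 0 < n) (st : ℝ × ℝ × (Fin d → ℝ))
    (b : Fin n → ℝ) (Vb : Fin n → Fin d → ℝ) : ℝ × ℝ × (Fin d → ℝ) :=
  let μ' := max st.1 (Finset.univ.sup' ⟨⟨0, hn⟩, Finset.mem_univ _⟩ b)
  let δ := Real.exp (st.1 - μ')
  (μ', δ * st.2.1 + ∑ j, Real.exp (b j - μ'),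
    δ • st.2.2 + ∑ j, Real.exp (b j - μ') • Vb j)

section SMAux

variable {d k : ℕ} {sz : Fin k → ℕ}

def SMblk (sz : Fin k → ℕ) (i : Fin k) : Finset (Σ i : Fin k, Fin (sz i)) :=
  Finset.univ.map ⟨Sigma.mk i, sigma_mk_injective⟩

lemma mem_SMblk {i : Fin k} {p : Σ i : Fin k, Fin (sz i)} :
    p ∈ SMblk sz i ↔ p.1 = i := by
  constructor
  · rintro hp
    simp only [SMblk, Finset.mem_map, Function.Embedding.coeFn_mk] at hp
    obtain ⟨j, _, rfl⟩ := hp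
    rfl
  · rintro rfl
    simp [SMblk]

def SMInv (x : (Σ i : Fin k, Fin (sz i)) → ℝ)
    (V : (Σ i : Fin k, Fin (sz i)) → Fin d → ℝ)
    (S : Finset (Σ i : Fin k, Fin (sz i))) (st : ℝ × ℝ × (Fin d → ℝ)) : Prop :=
  (∃ p ∈ S, x p = st.1) ∧ (∀ p ∈ S, x p ≤ st.1) ∧
  st.2.1 = ∑ p ∈ S, Real.exp (x p - st.1) ∧
  st.2.2 = ∑ p ∈ S, Real.exp (x p - st.1) • V p

lemma SMInv_init (hsz : ∀ i, 0 < sz i) (xb : (i : Fin k) → Fin (sz i) → ℝ)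
    (Vb : (i : Fin k) → Fin (sz i) → Fin d → ℝ) (i : Fin k) :
    SMInv (fun p => xb p.1 p.2) (fun p => Vb p.1 p.2) (SMblk sz i)
      (smInit (hsz i) (xb i) (Vb i)) := by
  have hne : (Finset.univ : Finset (Fin (sz i))).Nonempty := ⟨⟨0, hsz i⟩, Finset.mem_univ _⟩
  refine ⟨?_, ?_, ?_, ?_⟩
  · obtain ⟨j, _, hj⟩ := Finset.exists_mem_eq_sup' hne (xb i)
    exact ⟨⟨i, j⟩, mem_SMblk.2 rfl, hj.symm⟩
  · rintro p hp
    obtain ⟨⟨i', j⟩, rfl⟩ : ∃ q : Σ i : Fin k, Fin (sz i), q = p := ⟨p, rfl⟩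
    obtain rfl : i' = i := mem_SMblk.1 hp
    exact Finset.le_sup' _ (Finset.mem_univ j)
  · simp [smInit, SMblk, Finset.sum_map]
  · simp [smInit, SMblk, Finset.sum_map]

lemma SMInv_step (hsz : ∀ i, 0 < sz i) (xb : (i : Fin k) → Fin (sz i) → ℝ)
    (Vb : (i : Fin k) → Fin (sz i) → Fin d → ℝ) (i : Fin k)
    (S : Finset (Σ i : Fin k, Fin (sz i))) (st : ℝ × ℝ × (Fin d → ℝ))
    (hdisj : Disjoint S (SMblk sz i))
    (h : SMInv (fun p => xb p.1 p.2) (fun p => Vb p.1 p.2) S st) :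
    SMInv (fun p => xb p.1 p.2) (fun p => Vb p.1 p.2) (S ∪ SMblk sz i)
      (smStep (hsz i) st (xb i) (Vb i)) := by
  obtain ⟨⟨pw, hpw, hpweq⟩, hub, hz, ho⟩ := h
  have hne : (Finset.univ : Finset (Fin (sz i))).Nonempty := ⟨⟨0, hsz i⟩, Finset.mem_univ _⟩
  set μ' := max st.1 (Finset.univ.sup' ⟨⟨0, hsz i⟩, Finset.mem_univ _⟩ (xb i)) with hμ'
  have hstep1 : (smStep (hsz i) st (xb i) (Vb i)).1 = μ' := rfl
  have hblkub : ∀ p ∈ SMblk sz i, xb p.1 p.2 ≤ μ' := by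
    rintro ⟨i', j⟩ hp
    obtain rfl : i' = i := mem_SMblk.1 hp
    exact le_trans (Finset.le_sup' _ (Finset.mem_univ j)) (le_max_right _ _)
  refine ⟨?_, ?_, ?_, ?_⟩
  · rcases le_total (Finset.univ.sup' ⟨⟨0, hsz i⟩, Finset.mem_univ _⟩ (xb i)) st.1 with hle | hle
    · exact ⟨pw, Finset.mem_union_left _ hpw,
        by rw [hstep1, hμ', sup_eq_left.2 hle, ← hpweq]⟩
    · obtain ⟨j, _, hj⟩ := Finset.exists_mem_eq_sup'
        (⟨⟨0, hsz i⟩, Finset.mem_univ _⟩ : (Finset.univ : Finset (Fin (sz i))).Nonempty) (xb i)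
      exact ⟨⟨i, j⟩, Finset.mem_union_right _ (mem_SMblk.2 rfl),
        by rw [hstep1, hμ', sup_eq_right.2 hle, hj]⟩
  · rintro p hp
    rcases Finset.mem_union.1 hp with hp | hp
    · exact le_trans (hub p hp) (le_max_left _ _)
    · exact hblkub p hp
  · rw [hstep1, Finset.sum_union hdisj]
    have h1 : ∑ p ∈ S, Real.exp (xb p.1 p.2 - μ')
        = Real.exp (st.1 - μ') * st.2.1 := by
      rw [hz, Finset.mul_sum]
      refine Finset.sum_congr rfl fun p _ => ?_
      rw [← Real.exp_add]; ring_nf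
    have h2 : ∑ p ∈ SMblk sz i, Real.exp (xb p.1 p.2 - μ')
        = ∑ j, Real.exp (xb i j - μ') := by
      simp [SMblk, Finset.sum_map]
    rw [h1, h2]; rfl
  · rw [hstep1, Finset.sum_union hdisj]
    have h1 : ∑ p ∈ S, Real.exp (xb p.1 p.2 - μ') • (fun p : Σ i : Fin k, Fin (sz i) => Vb p.1 p.2) p
        = Real.exp (st.1 - μ') • st.2.2 := by
      rw [ho, Finset.smul_sum]
      refine Finset.sum_congr rfl fun p _ => ?_
      rw [smul_smul, ← Real.exp_add]; ring_nf
    have h2 : ∑ p ∈ SMblk sz i, Real.exp (xb p.1 p.2 - μ') • (fun p : Σ i : Fin k, Fin (sz i) => Vb p.1 p.2) p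
        = ∑ j, Real.exp (xb i j - μ') • Vb i j := by
      simp [SMblk, Finset.sum_map]
    rw [h1, h2]; rfl

lemma SMInv_fold (hsz : ∀ i, 0 < sz i) (xb : (i : Fin k) → Fin (sz i) → ℝ)
    (Vb : (i : Fin k) → Fin (sz i) → Fin d → ℝ) :
    ∀ (l : List (Fin k)) (S : Finset (Σ i : Fin k, Fin (sz i)))
      (st : ℝ × ℝ × (Fin d → ℝ)),
      SMInv (fun p => xb p.1 p.2) (fun p => Vb p.1 p.2) S st →
      (∀ i ∈ l, Disjoint S (SMblk sz i)) → l.Nodup →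
      SMInv (fun p => xb p.1 p.2) (fun p => Vb p.1 p.2)
        (S ∪ l.foldr (fun i acc => SMblk sz i ∪ acc) ∅)
        (l.foldl (fun st i => smStep (hsz i) st (xb i) (Vb i)) st)
  | [], S, st, h, _, _ => by simpa using h
  | (i :: tl), S, st, h, hdisj, hnd => by
    have hstep := SMInv_step hsz xb Vb i S st (hdisj i (List.mem_cons_self)) h
    have hdisj' : ∀ j ∈ tl, Disjoint (S ∪ SMblk sz i) (SMblk sz j) := by
      intro j hj
      refine Finset.disjoint_union_left.2 ⟨hdisj j (List.mem_cons_of_mem _ hj), ?_⟩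
      rw [Finset.disjoint_left]
      intro p hp hp'
      have hij : i = j := (mem_SMblk.1 hp).symm.trans (mem_SMblk.1 hp')
      exact (List.nodup_cons.1 hnd).1 (hij ▸ hj)
    have := SMInv_fold hsz xb Vb tl (S ∪ SMblk sz i) _ hstep hdisj' (List.nodup_cons.1 hnd).2
    simpa [Finset.union_assoc] using this

lemma SMblk_subset_foldr (sz : Fin k → ℕ) :
    ∀ (l : List (Fin k)) (i : Fin k), i ∈ l →
      SMblk sz i ⊆ l.foldr (fun i acc => SMblk sz i ∪ acc) ∅
  | (j :: tl), i, hi => by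
    rcases List.mem_cons.1 hi with rfl | hi
    · exact Finset.subset_union_left
    · exact (SMblk_subset_foldr sz tl i hi).trans Finset.subset_union_right

/-- Streaming SoftMax-Contraction over `k` consecutive nonempty blocks: the final
state `(μ*, z*, o*)` satisfies `μ* = max of all entries`,
`z* = ∑ exp(entry − μ*)`, and `(1/z*) • o*` is the SoftMax-weighted sum of the
rows. The entries of the full input are indexed by the sigma type `Σ i, Fin (sz i)`. -/
theorem streamed_softmax_contraction_correct
    (d k : ℕ) (hk : 0 < k) (sz : Fin k → ℕ) (hsz : ∀ i, 0 < sz i)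
    (xb : (i : Fin k) → Fin (sz i) → ℝ)
    (Vb : (i : Fin k) → Fin (sz i) → Fin d → ℝ)
    (final : ℝ × ℝ × (Fin d → ℝ))
    (hfinal : final = ((List.finRange k).drop 1).foldl
        (fun st i => smStep (hsz i) st (xb i) (Vb i))
        (smInit (hsz ⟨0, hk⟩) (xb ⟨0, hk⟩) (Vb ⟨0, hk⟩))) :
    final.1 = Finset.univ.sup'
        ⟨⟨⟨0, hk⟩, ⟨0, hsz ⟨0, hk⟩⟩⟩, Finset.mem_univ _⟩
        (fun p : Σ i : Fin k, Fin (sz i) => xb p.1 p.2) ∧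
    final.2.1 = ∑ p : Σ i : Fin k, Fin (sz i), Real.exp (xb p.1 p.2 - final.1) ∧
    (1 / final.2.1) • final.2.2
      = ∑ p : Σ i : Fin k, Fin (sz i),
          softmax (fun p : Σ i : Fin k, Fin (sz i) => xb p.1 p.2) p • Vb p.1 p.2 := by
  set l := (List.finRange k).drop 1 with hl
  set z : Fin k := ⟨0, hk⟩ with hz0
  have hnd : l.Nodup := (List.drop_sublist 1 _).nodup (List.nodup_finRange k)
  have hznl : z ∉ l := by
    obtain ⟨m, rfl⟩ := Nat.exists_eq_succ_of_ne_zero hk.ne'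
    rw [hl, List.finRange_succ]
    simp only [List.drop_succ_cons, List.drop_zero, List.mem_map]
    rintro ⟨j, _, hj⟩
    exact (Fin.succ_ne_zero j) (by simpa [hz0] using hj)
  have hdisj : ∀ i ∈ l, Disjoint (SMblk sz z) (SMblk sz i) := by
    intro i hi
    rw [Finset.disjoint_left]
    intro p hp hp'
    exact hznl (((mem_SMblk.1 hp).symm.trans (mem_SMblk.1 hp')) ▸ hi)
  have hinv := SMInv_fold hsz xb Vb l (SMblk sz z) _ (SMInv_init hsz xb Vb z) hdisj hnd
  rw [← hfinal] at hinv
  have hcover : SMblk sz z ∪ l.foldr (fun i acc => SMblk sz i ∪ acc) ∅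
      = (Finset.univ : Finset (Σ i : Fin k, Fin (sz i))) := by
    refine Finset.eq_univ_of_forall ?_
    rintro ⟨i, j⟩
    by_cases hi : i = z
    · subst hi; exact Finset.mem_union_left _ (mem_SMblk.2 rfl)
    · refine Finset.mem_union_right _ (SMblk_subset_foldr sz l i ?_ (mem_SMblk.2 rfl))
      obtain ⟨m, rfl⟩ := Nat.exists_eq_succ_of_ne_zero hk.ne'
      rw [hl, List.finRange_succ]
      simp only [List.drop_succ_cons, List.drop_zero, List.mem_map]
      have hine : i ≠ 0 := by intro h; apply hi; rw [h, hz0]; exact Fin.ext (by simp)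
      exact ⟨i.pred hine, List.mem_finRange _, Fin.succ_pred i hine⟩
  rw [hcover] at hinv
  obtain ⟨⟨pw, _, hpw⟩, hub, hzsum, hosum⟩ := hinv
  have hμ : final.1 = Finset.univ.sup'
      ⟨⟨⟨0, hk⟩, ⟨0, hsz ⟨0, hk⟩⟩⟩, Finset.mem_univ _⟩
      (fun p : Σ i : Fin k, Fin (sz i) => xb p.1 p.2) := by
    refine le_antisymm ?_ (Finset.sup'_le _ _ fun p _ => hub p (Finset.mem_univ p))
    have := Finset.le_sup' (f := fun p : Σ i : Fin k, Fin (sz i) => xb p.1 p.2)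
      (b := pw) (Finset.mem_univ pw)
    rw [← hpw]
    exact this
  refine ⟨hμ, hzsum, ?_⟩
  have hzpos : 0 < final.2.1 := by
    rw [hzsum]
    exact Finset.sum_pos (fun p _ => Real.exp_pos _)
      ⟨⟨⟨0, hk⟩, ⟨0, hsz ⟨0, hk⟩⟩⟩, Finset.mem_univ _⟩
  have hsumexp : ∑ p : Σ i : Fin k, Fin (sz i), Real.exp (xb p.1 p.2)
      = Real.exp final.1 * final.2.1 := by
    rw [hzsum, Finset.mul_sum]
    refine Finset.sum_congr rfl fun p _ => ?_
    rw [← Real.exp_add]; ring_nf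
  rw [hosum, Finset.smul_sum]
  refine Finset.sum_congr rfl fun p _ => ?_
  rw [smul_smul, softmax, hsumexp, Real.exp_sub]
  congr 1
  field_simp

end SMAux
end
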